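/- (Divisibility claim from the proof of Lemma 6.2, the 5-dimensional example.) For every symmetric polynomial f ∈ MvPolynomial (Fin 3) (ZMod 2) (i.e. f is invariant under every permutation of the three variables), there exists h ∈ R such that Σ_{v ∈ {p,q,r,s}} f(T_v) · ∏_{w ≠ v} P_w = σ² · h · (P_p · P_q · P_r · P_s). Equivalently, the rational expression Σ_v f(T_v)/P_v is a polynomial divisible by σ² where σ = ρ1 + ρ2 + ρ3. -/

import Mathlib

open MvPolynomial Finset

namespace FourPointsAux

noncomputable section

abbrev Mv := MvPolynomial (Fin 3) (ZMod 2)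

def TT : Fin 4 → Fin 3 → Mv :=
  ![![X 0, X 1, X 2],
    ![X 0, X 0 + X 1, X 0 + X 2],
    ![X 1, X 0 + X 1, X 1 + X 2],
    ![X 2, X 0 + X 2, X 1 + X 2]]

def PP (v : Fin 4) : Mv := ∏ i, TT v i
def QQ (v : Fin 4) : Mv := ∏ w ∈ Finset.univ.erase v, PP w
def AA : Fin 4 → Mv :=
  ![X 0*X 1 + X 0*X 2 + X 1*X 2, X 0^2 + X 1*X 2, X 1^2 + X 0*X 2, X 2^2 + X 0*X 1]
def sg : Mv := X 0 + X 1 + X 2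
def WW : Fin 4 → Mv := ![0, X 0^4, X 1^4, X 2^4]
def EV (v : Fin 4) : Fin 3 → Mv := ![sg, AA v, PP v]
def Tsum (b c : ℕ) : Mv := ∑ v, AA v ^ b * PP v ^ c
def Ssum (b c : ℕ) : Mv := ∑ v, AA v ^ b * PP v ^ c * QQ v

lemma two : (2 : Mv) = 0 := by
  have := CharP.cast_eq_zero Mv 2; exact_mod_cast this

lemma hPP0 : PP 0 = X 0 * (X 1 * X 2) := by
  simp [PP, TT, Fin.prod_univ_three, mul_assoc]
lemma hPP1 : PP 1 = X 0 * ((X 0 + X 1) * (X 0 + X 2)) := by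
  simp [PP, TT, Fin.prod_univ_three, mul_assoc]
lemma hPP2 : PP 2 = X 1 * ((X 0 + X 1) * (X 1 + X 2)) := by
  simp [PP, TT, Fin.prod_univ_three, mul_assoc]
lemma hPP3 : PP 3 = X 2 * ((X 0 + X 2) * (X 1 + X 2)) := by
  simp [PP, TT, Fin.prod_univ_three, mul_assoc]

lemma hAA0 : AA 0 = X 0*X 1 + X 0*X 2 + X 1*X 2 := by simp [AA]
lemma hAA1 : AA 1 = X 0^2 + X 1*X 2 := by simp [AA]
lemma hAA2 : AA 2 = X 1^2 + X 0*X 2 := by simp [AA]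
lemma hAA3 : AA 3 = X 2^2 + X 0*X 1 := by simp [AA]

lemma hAdvd : ∀ v, sg ∣ (AA v - AA 0)
  | 0 => ⟨0, by rw [hAA0]; ring⟩
  | 1 => ⟨X 0, by rw [hAA1, hAA0]; unfold sg; linear_combination (-1*(X 0*X 2) + -1*(X 0*X 1)) * two⟩
  | 2 => ⟨X 1, by rw [hAA2, hAA0]; unfold sg; linear_combination (-1*(X 1*X 2) + -1*(X 0*X 1)) * two⟩
  | 3 => ⟨X 2, by rw [hAA3, hAA0]; unfold sg; linear_combination (-1*(X 1*X 2) + -1*(X 0*X 2)) * two⟩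

lemma hPdvd : ∀ v, sg ∣ (PP v - PP 0)
  | 0 => ⟨0, by ring⟩
  | 1 => ⟨X 0^2, by rw [hPP1, hPP0]; unfold sg; ring⟩
  | 2 => ⟨X 1^2, by rw [hPP2, hPP0]; unfold sg; ring⟩
  | 3 => ⟨X 2^2, by rw [hPP3, hPP0]; unfold sg; ring⟩

lemma hAsq : ∀ v, AA v^2 = AA 0^2 + sg * PP 0 + sg * PP v
  | 0 => by rw [hAA0, hPP0]; unfold sg
            linear_combination (-1*(X 0*X 1*X 2^2) + -1*(X 0*X 1^2*X 2) + -1*(X 0^2*X 1*X 2)) * two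
  | 1 => by rw [hAA1, hAA0, hPP0, hPP1]; unfold sg
            linear_combination (-2*(X 0*X 1*X 2^2) + -2*(X 0*X 1^2*X 2) + -1*(X 0^2*X 2^2) + -2*(X 0^2*X 1*X 2) + -1*(X 0^2*X 1^2) + -1*(X 0^3*X 2) + -1*(X 0^3*X 1)) * two
  | 2 => by rw [hAA2, hAA0, hPP0, hPP2]; unfold sg
            linear_combination (-1*(X 1^2*X 2^2) + -1*(X 1^3*X 2) + -1*(X 0*X 1^3) + -2*(X 0*X 1*X 2^2) + -2*(X 0*X 1^2*X 2) + -2*(X 0^2*X 1*X 2) + -1*(X 0^2*X 1^2)) * two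
  | 3 => by rw [hAA3, hAA0, hPP0, hPP3]; unfold sg
            linear_combination (-1*(X 1*X 2^3) + -1*(X 1^2*X 2^2) + -1*(X 0*X 2^3) + -2*(X 0*X 1*X 2^2) + -2*(X 0*X 1^2*X 2) + -1*(X 0^2*X 2^2) + -2*(X 0^2*X 1*X 2)) * two

lemma hPsq : ∀ v, PP v^2 = PP 0^2 + sg^2 * WW v
  | 0 => by rw [hPP0]; simp [WW]
  | 1 => by rw [hPP1, hPP0]; simp only [WW]
            rw [show (![0, X 0^4, X 1^4, X 2^4] : Fin 4 → Mv) 1 = X 0^4 from rfl]; unfold sg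
            linear_combination ((X 0^3*X 1*X 2^2) + (X 0^3*X 1^2*X 2) + (X 0^4*X 1*X 2)) * two
  | 2 => by rw [hPP2, hPP0]; simp only [WW]
            rw [show (![0, X 0^4, X 1^4, X 2^4] : Fin 4 → Mv) 2 = X 1^4 from rfl]; unfold sg
            linear_combination ((X 0*X 1^3*X 2^2) + (X 0*X 1^4*X 2) + (X 0^2*X 1^3*X 2)) * two
  | 3 => by rw [hPP3, hPP0]; simp only [WW]
            rw [show (![0, X 0^4, X 1^4, X 2^4] : Fin 4 → Mv) 3 = X 2^4 from rfl]; unfold sg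
            linear_combination ((X 0*X 1*X 2^4) + (X 0*X 1^2*X 2^3) + (X 0^2*X 1*X 2^3)) * two

lemma four_mul (x : Mv) : (4 : ℕ) • x = 0 := by
  rw [nsmul_eq_mul]
  rw [show ((4:ℕ):Mv) = 2*2 from by push_cast; ring, two]
  ring

lemma hTdvd (b c : ℕ) : sg ∣ Tsum b c := by
  have key : Tsum b c = ∑ v : Fin 4, (AA v ^ b * PP v ^ c - AA 0 ^ b * PP 0 ^ c) := by
    rw [Finset.sum_sub_distrib, Finset.sum_const, card_univ, Fintype.card_fin, four_mul]
    unfold Tsum; ring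
  rw [key]
  refine Finset.dvd_sum fun v _ => ?_
  have h1 : sg ∣ AA v ^ b - AA 0 ^ b := (hAdvd v).trans (sub_dvd_pow_sub_pow _ _ _)
  have h2 : sg ∣ PP v ^ c - PP 0 ^ c := (hPdvd v).trans (sub_dvd_pow_sub_pow _ _ _)
  obtain ⟨u, hu⟩ := h1; obtain ⟨w, hw⟩ := h2
  exact ⟨u * PP v ^ c + AA 0 ^ b * w, by linear_combination PP v ^ c * hu + AA 0 ^ b * hw⟩

lemma Trec_b (b c : ℕ) :
    Tsum (b+2) c = (AA 0^2 + sg * PP 0) * Tsum b c + sg * Tsum b (c+1) := by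
  unfold Tsum
  rw [Finset.mul_sum, Finset.mul_sum, ← Finset.sum_add_distrib]
  refine Finset.sum_congr rfl fun v _ => ?_
  linear_combination (AA v ^ b * PP v ^ c) * hAsq v

lemma Trec_c (b c : ℕ) :
    Tsum b (c+2) = PP 0^2 * Tsum b c + sg^2 * ∑ v, AA v ^ b * PP v ^ c * WW v := by
  unfold Tsum
  rw [Finset.mul_sum, Finset.mul_sum, ← Finset.sum_add_distrib]
  refine Finset.sum_congr rfl fun v _ => ?_
  linear_combination (AA v ^ b * PP v ^ c) * hPsq v

lemma T00 : Tsum 0 0 = 0 := by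
  unfold Tsum
  simp only [pow_zero, one_mul, Finset.sum_const, card_univ, Fintype.card_fin, four_mul]

lemma T01 : Tsum 0 1 = sg^3 := by
  unfold Tsum
  rw [Fin.sum_univ_four]
  simp only [pow_zero, pow_one, one_mul]
  rw [hPP0, hPP1, hPP2, hPP3]; unfold sg
  linear_combination (-1*(X 1*X 2^2) + -1*(X 1^2*X 2) + -1*(X 0*X 2^2) + -1*(X 0*X 1*X 2) + -1*(X 0*X 1^2) + -1*(X 0^2*X 2) + -1*(X 0^2*X 1)) * two

lemma T10 : Tsum 1 0 = sg^2 := by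
  unfold Tsum
  rw [Fin.sum_univ_four]
  simp only [pow_zero, pow_one, mul_one]
  rw [hAA0, hAA1, hAA2, hAA3]; unfold sg; ring

lemma T11 : Tsum 1 1 = sg^2 * (AA 0 * sg + PP 0 + X 0^3 + X 1^3 + X 2^3) := by
  unfold Tsum
  rw [Fin.sum_univ_four]
  simp only [pow_one]
  rw [hAA0, hAA1, hAA2, hAA3, hPP0, hPP1, hPP2, hPP3]; unfold sg
  linear_combination (-1*(X 1*X 2^4) + -2*(X 1^2*X 2^3) + -2*(X 1^3*X 2^2) + -1*(X 1^4*X 2) + -1*(X 0*X 2^4) + -4*(X 0*X 1*X 2^3) + -5*(X 0*X 1^2*X 2^2) + -4*(X 0*X 1^3*X 2) + -1*(X 0*X 1^4) + -2*(X 0^2*X 2^3) + -5*(X 0^2*X 1*X 2^2) + -5*(X 0^2*X 1^2*X 2) + -2*(X 0^2*X 1^3) + -2*(X 0^3*X 2^2) + -4*(X 0^3*X 1*X 2) + -2*(X 0^3*X 1^2) + -1*(X 0^4*X 2) + -1*(X 0^4*X 1)) * two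

lemma Tdvd2 : ∀ b c, sg^2 ∣ Tsum b c := by
  have hbase : ∀ b, sg^2 ∣ Tsum b 0 → sg^2 ∣ Tsum b 1 → ∀ c, sg^2 ∣ Tsum b c := by
    intro b h0 h1 c
    induction c using Nat.twoStepInduction with
    | zero => exact h0
    | one => exact h1
    | more c ih _ =>
      rw [Trec_c]
      exact dvd_add (ih.mul_left _) (dvd_mul_right _ _)
  intro b
  induction b using Nat.twoStepInduction with
  | zero =>
    refine hbase 0 ?_ ?_
    · rw [T00]; exact dvd_zero _
    · exact ⟨sg, by rw [T01]; ring⟩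
  | one =>
    refine hbase 1 ?_ ?_
    · exact ⟨1, by rw [T10]; ring⟩
    · exact ⟨AA 0 * sg + PP 0 + X 0^3 + X 1^3 + X 2^3, T11⟩
  | more b ih _ =>
    intro c
    rw [Trec_b]
    refine dvd_add ((ih c).mul_left _) ?_
    obtain ⟨k, hk⟩ := hTdvd b (c+1)
    exact ⟨k, by rw [hk]; ring⟩

lemma hQQ0 : QQ 0 = PP 1 * (PP 2 * PP 3) := by
  unfold QQ
  rw [show (Finset.univ.erase (0 : Fin 4)) = {1, 2, 3} from by decide,
    Finset.prod_insert (by decide), Finset.prod_insert (by decide), Finset.prod_singleton]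
lemma hQQ1 : QQ 1 = PP 0 * (PP 2 * PP 3) := by
  unfold QQ
  rw [show (Finset.univ.erase (1 : Fin 4)) = {0, 2, 3} from by decide,
    Finset.prod_insert (by decide), Finset.prod_insert (by decide), Finset.prod_singleton]
lemma hQQ2 : QQ 2 = PP 0 * (PP 1 * PP 3) := by
  unfold QQ
  rw [show (Finset.univ.erase (2 : Fin 4)) = {0, 1, 3} from by decide,
    Finset.prod_insert (by decide), Finset.prod_insert (by decide), Finset.prod_singleton]
lemma hQQ3 : QQ 3 = PP 0 * (PP 1 * PP 2) := by
  unfold QQ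
  rw [show (Finset.univ.erase (3 : Fin 4)) = {0, 1, 2} from by decide,
    Finset.prod_insert (by decide), Finset.prod_insert (by decide), Finset.prod_singleton]

lemma hPQ : ∀ v, PP v * QQ v = PP 0 * PP 1 * PP 2 * PP 3
  | 0 => by rw [hQQ0]; ring
  | 1 => by rw [hQQ1]; ring
  | 2 => by rw [hQQ2]; ring
  | 3 => by rw [hQQ3]; ring

lemma Srec (b c : ℕ) :
    Ssum (b+2) c = (AA 0^2 + sg * PP 0) * Ssum b c + sg * Ssum b (c+1) := by
  unfold Ssum
  rw [Finset.mul_sum, Finset.mul_sum, ← Finset.sum_add_distrib]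
  refine Finset.sum_congr rfl fun v _ => ?_
  linear_combination (AA v ^ b * PP v ^ c * QQ v) * hAsq v

lemma hSc (b c : ℕ) : Ssum b (c+1) = (PP 0 * PP 1 * PP 2 * PP 3) * Tsum b c := by
  unfold Ssum Tsum
  rw [Finset.mul_sum]
  refine Finset.sum_congr rfl fun v _ => ?_
  linear_combination (AA v ^ b * PP v ^ c) * hPQ v

lemma S00 : Ssum 0 0 = 0 := by
  unfold Ssum
  rw [Fin.sum_univ_four]
  simp only [pow_zero, one_mul]
  rw [hQQ0, hQQ1, hQQ2, hQQ3, hPP0, hPP1, hPP2, hPP3]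
  linear_combination ((X 0*X 1^3*X 2^5) + 2*(X 0*X 1^4*X 2^4) + (X 0*X 1^5*X 2^3) + 2*(X 0^2*X 1^2*X 2^5) + 5*(X 0^2*X 1^3*X 2^4) + 5*(X 0^2*X 1^4*X 2^3) + 2*(X 0^2*X 1^5*X 2^2) + (X 0^3*X 1*X 2^5) + 5*(X 0^3*X 1^2*X 2^4) + 8*(X 0^3*X 1^3*X 2^3) + 5*(X 0^3*X 1^4*X 2^2) + (X 0^3*X 1^5*X 2) + 2*(X 0^4*X 1*X 2^4) + 5*(X 0^4*X 1^2*X 2^3) + 5*(X 0^4*X 1^3*X 2^2) + 2*(X 0^4*X 1^4*X 2) + (X 0^5*X 1*X 2^3) + 2*(X 0^5*X 1^2*X 2^2) + (X 0^5*X 1^3*X 2)) * two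

lemma S10 : Ssum 1 0 = 0 := by
  unfold Ssum
  rw [Fin.sum_univ_four]
  simp only [pow_zero, pow_one, mul_one]
  rw [hQQ0, hQQ1, hQQ2, hQQ3, hPP0, hPP1, hPP2, hPP3, hAA0, hAA1, hAA2, hAA3]
  linear_combination ((X 0*X 1^4*X 2^6) + 2*(X 0*X 1^5*X 2^5) + (X 0*X 1^6*X 2^4) + 2*(X 0^2*X 1^3*X 2^6) + 7*(X 0^2*X 1^4*X 2^5) + 7*(X 0^2*X 1^5*X 2^4) + 2*(X 0^2*X 1^6*X 2^3) + 2*(X 0^3*X 1^2*X 2^6) + 10*(X 0^3*X 1^3*X 2^5) + 16*(X 0^3*X 1^4*X 2^4) + 10*(X 0^3*X 1^5*X 2^3) + 2*(X 0^3*X 1^6*X 2^2) + (X 0^4*X 1*X 2^6) + 7*(X 0^4*X 1^2*X 2^5) + 16*(X 0^4*X 1^3*X 2^4) + 16*(X 0^4*X 1^4*X 2^3) + 7*(X 0^4*X 1^5*X 2^2) + (X 0^4*X 1^6*X 2) + 2*(X 0^5*X 1*X 2^5) + 7*(X 0^5*X 1^2*X 2^4) + 10*(X 0^5*X 1^3*X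 2^3) + 7*(X 0^5*X 1^4*X 2^2) + 2*(X 0^5*X 1^5*X 2) + (X 0^6*X 1*X 2^4) + 2*(X 0^6*X 1^2*X 2^3) + 2*(X 0^6*X 1^3*X 2^2) + (X 0^6*X 1^4*X 2)) * two

lemma Sdvd (b c : ℕ) : sg^2 * (PP 0 * PP 1 * PP 2 * PP 3) ∣ Ssum b c := by
  have hc : ∀ b c, sg^2 * (PP 0 * PP 1 * PP 2 * PP 3) ∣ Ssum b (c+1) := by
    intro b c
    rw [hSc]
    obtain ⟨k, hk⟩ := Tdvd2 b c
    exact ⟨k, by rw [hk]; ring⟩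
  cases c with
  | succ c => exact hc b c
  | zero =>
    induction b using Nat.twoStepInduction with
    | zero => rw [S00]; exact dvd_zero _
    | one => rw [S10]; exact dvd_zero _
    | more b ih _ =>
      rw [Srec]
      refine dvd_add (ih.mul_left _) ?_
      rw [hSc]
      obtain ⟨k, hk⟩ := Tdvd2 b 0
      exact ⟨sg * k, by rw [hk]; ring⟩

lemma key (g : Mv) :
    sg^2 * (PP 0 * PP 1 * PP 2 * PP 3) ∣ ∑ v : Fin 4, (aeval (EV v) g) * QQ v := by
  have expand : ∀ v : Fin 4, aeval (EV v) g
      = ∑ d ∈ g.support, aeval (EV v) (monomial d (coeff d g)) := fun v => by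
    conv_lhs => rw [g.as_sum]
    rw [map_sum]
  simp_rw [expand, Finset.sum_mul]
  rw [Finset.sum_comm]
  refine Finset.dvd_sum fun d _ => ?_
  have hmon : ∀ v : Fin 4, aeval (EV v) (monomial d (coeff d g))
      = C (coeff d g) * (sg ^ d 0 * (AA v ^ d 1 * PP v ^ d 2)) := by
    intro v
    rw [aeval_monomial, Finsupp.prod_fintype _ _ (fun i => pow_zero _), Fin.prod_univ_three]
    rw [show EV v 0 = sg from rfl, show EV v 1 = AA v from rfl, show EV v 2 = PP v from rfl]
    rw [algebraMap_eq]
    ring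
  simp_rw [hmon]
  have : ∑ v : Fin 4, C (coeff d g) * (sg ^ d 0 * (AA v ^ d 1 * PP v ^ d 2)) * QQ v
      = C (coeff d g) * sg ^ d 0 * Ssum (d 1) (d 2) := by
    unfold Ssum
    rw [Finset.mul_sum]
    refine Finset.sum_congr rfl fun v _ => ?_
    ring
  rw [this]
  exact (Sdvd (d 1) (d 2)).mul_left _

lemma esymm2 : esymm (Fin 3) (ZMod 2) 2 = X 0*X 1 + (X 0*X 2 + X 1*X 2) := by
  simp only [esymm]
  rw [show (Finset.powersetCard 2 (Finset.univ : Finset (Fin 3))) = {{0,1},{0,2},{1,2}} from by decide]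
  rw [Finset.sum_insert (by decide), Finset.sum_insert (by decide), Finset.sum_singleton,
      Finset.prod_insert (by decide), Finset.prod_singleton,
      Finset.prod_insert (by decide), Finset.prod_singleton,
      Finset.prod_insert (by decide), Finset.prod_singleton]

lemma esymm3 : esymm (Fin 3) (ZMod 2) 3 = X 0*(X 1*X 2) := by
  simp only [esymm]
  rw [show (Finset.powersetCard 3 (Finset.univ : Finset (Fin 3))) = {{0,1,2}} from by decide]
  rw [Finset.sum_singleton, Finset.prod_insert (by decide), Finset.prod_insert (by decide),
      Finset.prod_singleton]

lemma esymm1 : esymm (Fin 3) (ZMod 2) 1 = X 0 + X 1 + X 2 := by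
  rw [esymm_one, Fin.sum_univ_three]

lemma hTT : ∀ (v : Fin 4), TT v 0 + TT v 1 + TT v 2 = sg
  | 0 => by show X 0 + X 1 + X 2 = sg; rfl
  | 1 => by show X 0 + (X 0 + X 1) + (X 0 + X 2) = sg
            unfold sg; linear_combination (X 0) * two
  | 2 => by show X 1 + (X 0 + X 1) + (X 1 + X 2) = sg
            unfold sg; linear_combination (X 1) * two
  | 3 => by show X 2 + (X 0 + X 2) + (X 1 + X 2) = sg
            unfold sg; linear_combination (X 2) * two

lemma hTT2 : ∀ (v : Fin 4), TT v 0 * TT v 1 + (TT v 0 * TT v 2 + TT v 1 * TT v 2) = AA v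
  | 0 => by show X 0 * X 1 + (X 0 * X 2 + X 1 * X 2) = AA 0
            rw [hAA0]; ring
  | 1 => by show X 0 * (X 0 + X 1) + (X 0 * (X 0 + X 2) + (X 0 + X 1) * (X 0 + X 2)) = AA 1
            rw [hAA1]; linear_combination ((X 0*X 2) + (X 0*X 1) + (X 0^2)) * two
  | 2 => by show X 1 * (X 0 + X 1) + (X 1 * (X 1 + X 2) + (X 0 + X 1) * (X 1 + X 2)) = AA 2
            rw [hAA2]; linear_combination ((X 1*X 2) + (X 1^2) + (X 0*X 1)) * two
  | 3 => by show X 2 * (X 0 + X 2) + (X 2 * (X 1 + X 2) + (X 0 + X 2) * (X 1 + X 2)) = AA 3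
            rw [hAA3]; linear_combination ((X 2^2) + (X 1*X 2) + (X 0*X 2)) * two

lemma hev (v : Fin 4) (i : Fin 3) :
    aeval (TT v) (esymm (Fin 3) (ZMod 2) ((i : ℕ) + 1)) = EV v i := by
  fin_cases i
  · show aeval (TT v) (esymm (Fin 3) (ZMod 2) 1) = EV v 0
    rw [esymm1, show EV v 0 = sg from rfl, ← hTT v]
    simp [map_add]
  · show aeval (TT v) (esymm (Fin 3) (ZMod 2) 2) = EV v 1
    rw [esymm2, show EV v 1 = AA v from rfl, ← hTT2 v]
    simp [map_add, map_mul]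
  · show aeval (TT v) (esymm (Fin 3) (ZMod 2) 3) = EV v 2
    rw [esymm3, show EV v 2 = PP v from rfl, show PP v = TT v 0 * (TT v 1 * TT v 2) from by
      rw [PP, Fin.prod_univ_three, mul_assoc]]
    simp [map_mul]

end

end FourPointsAux

open FourPointsAux in
/-- Divisibility claim from the proof of Lemma 6.2 (the 5-dimensional example): for every
symmetric `f ∈ MvPolynomial (Fin 3) (ZMod 2)`, the polynomial
`Σ_{v} f(T_v) · ∏_{w ≠ v} P_w` is divisible by `σ² · (P_p · P_q · P_r · P_s)`,
where `T_p, T_q, T_r, T_s` are the tangent triples of `RP³` and `P_v` their products. -/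
theorem four_points_dim5_divisibility
    (f : MvPolynomial (Fin 3) (ZMod 2)) (hf : f.IsSymmetric)
    (Ts : Fin 4 → Fin 3 → MvPolynomial (Fin 3) (ZMod 2))
    (hTs : Ts = ![![X 0, X 1, X 2],
                  ![X 0, X 0 + X 1, X 0 + X 2],
                  ![X 1, X 0 + X 1, X 1 + X 2],
                  ![X 2, X 0 + X 2, X 1 + X 2]])
    (P : Fin 4 → MvPolynomial (Fin 3) (ZMod 2))
    (hP : ∀ v, P v = ∏ i, Ts v i)
    (σ : MvPolynomial (Fin 3) (ZMod 2)) (hσ : σ = X 0 + X 1 + X 2) :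
    ∃ h : MvPolynomial (Fin 3) (ZMod 2),
      ∑ v, (aeval (Ts v) f) * ∏ w ∈ Finset.univ.erase v, P w
        = σ ^ 2 * h * (P 0 * P 1 * P 2 * P 3) := by
  have hTs' : Ts = TT := hTs
  subst hTs'
  have hP' : P = PP := funext fun v => by rw [hP v]; rfl
  subst hP'
  obtain ⟨g, hg⟩ := esymmAlgHom_surjective (σ := Fin 3) (ZMod 2) (n := 3) (by simp) ⟨f, hf⟩
  have hfg : f = aeval (fun i : Fin 3 => esymm (Fin 3) (ZMod 2) ((i : ℕ) + 1)) g := by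
    have h1 := congrArg Subtype.val hg
    rw [esymmAlgHom_apply] at h1
    exact h1.symm
  have haev : ∀ v : Fin 4, aeval (TT v) f = aeval (EV v) g := by
    intro v
    rw [hfg, comp_aeval_apply]
    simp only [hev]
  have hsum : ∑ v : Fin 4, aeval (TT v) f * ∏ w ∈ Finset.univ.erase v, PP w
      = ∑ v : Fin 4, aeval (EV v) g * QQ v :=
    Finset.sum_congr rfl fun v _ => by rw [haev v]; rfl
  rw [hsum]
  obtain ⟨k, hk⟩ := key g
  refine ⟨k, ?_⟩
  rw [hk, hσ, show (X 0 + X 1 + X 2 : MvPolynomial (Fin 3) (ZMod 2)) = sg from rfl]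
  ring
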